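/- For the one-dimensional Ising model on {0,…,N} with couplings J_x > 0 and arbitrary signed external fields h_x ∈ ℝ, the endpoint covariance satisfies Cov(σ_0, σ_N) ≤ ( ∏_{x=0}^{N-1} 4 tanh(J_x)/(1+tanh(J_x))² ) · 4 exp( -2 |Σ_{x=0}^N h_x| ) / ( 1 + exp( -2 Σ_{x=0}^N |h_x| ) )². -/

import Mathlib

open Finset

/-- The spin value of a Boolean: `true ↦ +1`, `false ↦ -1`. -/
noncomputable def sp (b : Bool) : ℝ := if b then 1 else -1

/-- Hamiltonian of the 1D Ising chain on `{0, …, N}` with couplings `J` and fields `h`. -/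
noncomputable def ham (N : ℕ) (J : Fin N → ℝ) (h : Fin (N + 1) → ℝ)
    (σ : Fin (N + 1) → Bool) : ℝ :=
  -(∑ x : Fin N, J x * sp (σ x.castSucc) * sp (σ x.succ)) - ∑ x : Fin (N + 1), h x * sp (σ x)

/-- Partition function of the 1D Ising chain. -/
noncomputable def part (N : ℕ) (J : Fin N → ℝ) (h : Fin (N + 1) → ℝ) : ℝ :=
  ∑ σ : Fin (N + 1) → Bool, Real.exp (-(ham N J h σ))

/-- Gibbs probability of a configuration. -/
noncomputable def gibbs (N : ℕ) (J : Fin N → ℝ) (h : Fin (N + 1) → ℝ)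
    (σ : Fin (N + 1) → Bool) : ℝ :=
  Real.exp (-(ham N J h σ)) / part N J h

/-- Gibbs expectation of an observable. -/
noncomputable def gibbsE (N : ℕ) (J : Fin N → ℝ) (h : Fin (N + 1) → ℝ)
    (f : (Fin (N + 1) → Bool) → ℝ) : ℝ :=
  ∑ σ : Fin (N + 1) → Bool, gibbs N J h σ * f σ

/-- Covariance of the endpoint spins `σ_0` and `σ_N` under the Gibbs measure. -/
noncomputable def covEnds (N : ℕ) (J : Fin N → ℝ) (h : Fin (N + 1) → ℝ) : ℝ :=
  gibbsE N J h (fun σ => sp (σ 0) * sp (σ (Fin.last N))) -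
    gibbsE N J h (fun σ => sp (σ 0)) * gibbsE N J h (fun σ => sp (σ (Fin.last N)))

/-!
Fix the first spin to `b` and let `Z_b`, `M_b` be the sums of the Boltzmann weight, and of the
weight times `σ_N`, over the remaining spins. Peeling off the first spin shows that `Z` and `M`
obey the same transfer-matrix recursion, with a matrix of determinant `e^{2J} - e^{-2J}`, so
`Z₊M₋ - Z₋M₊ = -2 ∏ₓ (e^{2Jₓ} - e^{-2Jₓ})`. Written in these sums the covariance is
`4 ∏ₓ (e^{2Jₓ} - e^{-2Jₓ}) / Z²`, and the two constant configurations already give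
`Z ≥ e^{ΣJ} (e^{H} + e^{-H}) ≥ e^{ΣJ + |H|} (1 + e^{-2 Σ|h|})` with `H = Σ h`.
It remains to note that `4 tanh J / (1 + tanh J)² = (e^{2J} - e^{-2J}) e^{-2J}`.
-/

@[simp] lemma sp_true : sp true = 1 := rfl
@[simp] lemma sp_false : sp false = -1 := rfl

lemma sp_mul_self (b : Bool) : sp b * sp b = 1 := by cases b <;> simp

lemma Fintype.sum_fin_succ_pi {α M : Type*} [Fintype α] [AddCommMonoid M] (n : ℕ)
    (f : (Fin (n + 1) → α) → M) :
    ∑ σ, f σ = ∑ a, ∑ σ : Fin n → α, f (Fin.cons a σ) := by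
  rw [← Fintype.sum_equiv (Fin.consEquiv fun _ => α) (fun p => f (Fin.cons p.1 p.2)) f
    fun _ => rfl, Fintype.sum_prod_type]

lemma cross_eq_of_transfer {R : Type*} [CommRing R] (T : Bool → Bool → R)
    (z w z' w' : Bool → R)
    (hz : ∀ b, z b = ∑ c, T b c * z' c) (hw : ∀ b, w b = ∑ c, T b c * w' c) :
    z true * w false - z false * w true =
      (T true true * T false false - T true false * T false true) *
        (z' true * w' false - z' false * w' true) := by
  simp only [hz, hw, Fintype.sum_bool]
  ring

lemma Real.exp_add_mul_exp_sub_sub_exp_neg_add_mul_exp_neg_sub (a b : ℝ) :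
    Real.exp (a + b) * Real.exp (a - b) - Real.exp (-a + b) * Real.exp (-a - b) =
      Real.exp (2 * a) - Real.exp (-(2 * a)) := by
  simp only [← Real.exp_add]
  ring_nf

lemma Real.four_mul_tanh_div_one_add_tanh_sq (a : ℝ) :
    4 * Real.tanh a / (1 + Real.tanh a) ^ 2 =
      (Real.exp (2 * a) - Real.exp (-(2 * a))) * Real.exp (-(2 * a)) := by
  have hsq : Real.exp (2 * a) = Real.exp a ^ 2 := by rw [← Real.exp_nat_mul]; norm_num
  have hpos := Real.exp_pos a
  rw [Real.tanh_eq, Real.exp_neg, Real.exp_neg, hsq]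
  field_simp
  ring

lemma prod_four_mul_tanh_div_one_add_tanh_sq {ι : Type*} (s : Finset ι) (J : ι → ℝ) :
    ∏ x ∈ s, 4 * Real.tanh (J x) / (1 + Real.tanh (J x)) ^ 2 =
      (∏ x ∈ s, (Real.exp (2 * J x) - Real.exp (-(2 * J x)))) *
        Real.exp (-(2 * ∑ x ∈ s, J x)) := by
  rw [mul_sum, ← sum_neg_distrib, Real.exp_sum, ← prod_mul_distrib]
  exact prod_congr rfl fun x _ => Real.four_mul_tanh_div_one_add_tanh_sq (J x)

namespace Ising

variable {N : ℕ}

noncomputable def weight (N : ℕ) (J : Fin N → ℝ) (h : Fin (N + 1) → ℝ)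
    (σ : Fin (N + 1) → Bool) : ℝ :=
  Real.exp (-ham N J h σ)

lemma weight_pos (J : Fin N → ℝ) (h : Fin (N + 1) → ℝ) (σ : Fin (N + 1) → Bool) :
    0 < weight N J h σ :=
  Real.exp_pos _

lemma weight_zero (J : Fin 0 → ℝ) (h : Fin 1 → ℝ) (σ : Fin 1 → Bool) :
    weight 0 J h σ = Real.exp (h 0 * sp (σ 0)) := by
  simp [weight, ham]

lemma weight_cons (J : Fin (N + 1) → ℝ) (h : Fin (N + 2) → ℝ) (b : Bool)
    (σ : Fin (N + 1) → Bool) :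
    weight (N + 1) J h (Fin.cons b σ) =
      Real.exp (J 0 * sp b * sp (σ 0) + h 0 * sp b) * weight N (Fin.tail J) (Fin.tail h) σ := by
  rw [weight, weight, ← Real.exp_add]
  congr 1
  simp only [ham, Fin.sum_univ_succ, Fin.cons_zero, Fin.cons_succ, Fin.castSucc_zero,
    ← Fin.succ_castSucc, Fin.tail]
  ring

lemma weight_const (J : Fin N → ℝ) (h : Fin (N + 1) → ℝ) (b : Bool) :
    weight N J h (fun _ => b) = Real.exp (∑ x, J x + sp b * ∑ x, h x) := by
  simp only [weight, ham, mul_assoc, sp_mul_self, mul_one, mul_sum, neg_sub, sub_neg_eq_add]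
  congr 1
  simp only [mul_comm, add_comm]

lemma part_pos (J : Fin N → ℝ) (h : Fin (N + 1) → ℝ) : 0 < part N J h :=
  sum_pos (fun σ _ => weight_pos J h σ) univ_nonempty

lemma gibbsE_eq_sum_weight_mul_div (J : Fin N → ℝ) (h : Fin (N + 1) → ℝ)
    (f : (Fin (N + 1) → Bool) → ℝ) :
    gibbsE N J h f = (∑ σ, weight N J h σ * f σ) / part N J h := by
  simp only [gibbsE, gibbs, sum_div, div_mul_eq_mul_div, weight]

noncomputable def partFirst (N : ℕ) (J : Fin N → ℝ) (h : Fin (N + 1) → ℝ) (b : Bool) :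
    ℝ :=
  ∑ σ : Fin N → Bool, weight N J h (Fin.cons b σ)

noncomputable def lastMomentFirst (N : ℕ) (J : Fin N → ℝ) (h : Fin (N + 1) → ℝ)
    (b : Bool) : ℝ :=
  ∑ σ : Fin N → Bool,
    weight N J h (Fin.cons b σ) * sp ((Fin.cons b σ : Fin (N + 1) → Bool) (Fin.last N))

lemma sum_weight_cons_mul (J : Fin (N + 1) → ℝ) (h : Fin (N + 2) → ℝ) (b : Bool)
    (g : (Fin (N + 1) → Bool) → ℝ) :
    ∑ σ, weight (N + 1) J h (Fin.cons b σ) * g σ =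
      ∑ c, Real.exp (J 0 * sp b * sp c + h 0 * sp b) *
        ∑ σ, weight N (Fin.tail J) (Fin.tail h) (Fin.cons c σ) * g (Fin.cons c σ) := by
  rw [Fintype.sum_fin_succ_pi]
  simp only [weight_cons, Fin.cons_zero, mul_sum, mul_assoc]

lemma partFirst_succ (J : Fin (N + 1) → ℝ) (h : Fin (N + 2) → ℝ) (b : Bool) :
    partFirst (N + 1) J h b =
      ∑ c, Real.exp (J 0 * sp b * sp c + h 0 * sp b) *
        partFirst N (Fin.tail J) (Fin.tail h) c := by
  simpa [partFirst] using sum_weight_cons_mul J h b fun _ => 1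

lemma lastMomentFirst_succ (J : Fin (N + 1) → ℝ) (h : Fin (N + 2) → ℝ) (b : Bool) :
    lastMomentFirst (N + 1) J h b =
      ∑ c, Real.exp (J 0 * sp b * sp c + h 0 * sp b) *
        lastMomentFirst N (Fin.tail J) (Fin.tail h) c := by
  have hlast (σ : Fin (N + 1) → Bool) :
      (Fin.cons b σ : Fin (N + 2) → Bool) (Fin.last (N + 1)) = σ (Fin.last N) := by
    rw [← Fin.succ_last, Fin.cons_succ]
  simp only [lastMomentFirst, hlast]
  exact sum_weight_cons_mul J h b fun σ => sp (σ (Fin.last N))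

lemma partFirst_mul_lastMomentFirst_sub (J : Fin N → ℝ) (h : Fin (N + 1) → ℝ) :
    partFirst N J h true * lastMomentFirst N J h false -
        partFirst N J h false * lastMomentFirst N J h true =
      -2 * ∏ x, (Real.exp (2 * J x) - Real.exp (-(2 * J x))) := by
  induction N with
  | zero =>
    norm_num [partFirst, lastMomentFirst, weight_zero, Fin.last, ← Real.exp_add]
  | succ n ih =>
    rw [cross_eq_of_transfer _ _ _ _ _ (partFirst_succ J h) (lastMomentFirst_succ J h), ih,
      Fin.prod_univ_succ]
    simp only [Fin.tail, sp_true, sp_false, mul_one, mul_neg_one, neg_neg, ← sub_eq_add_neg,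
      Real.exp_add_mul_exp_sub_sub_exp_neg_add_mul_exp_neg_sub]
    ring

lemma part_eq_partFirst_add (J : Fin N → ℝ) (h : Fin (N + 1) → ℝ) :
    part N J h = partFirst N J h true + partFirst N J h false := by
  rw [part, Fintype.sum_fin_succ_pi, Fintype.sum_bool]
  rfl

lemma sum_weight_mul_sp_zero (J : Fin N → ℝ) (h : Fin (N + 1) → ℝ) :
    ∑ σ, weight N J h σ * sp (σ 0) = partFirst N J h true - partFirst N J h false := by
  simp [Fintype.sum_fin_succ_pi, partFirst, sub_eq_add_neg]

lemma sum_weight_mul_sp_last (J : Fin N → ℝ) (h : Fin (N + 1) → ℝ) :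
    ∑ σ, weight N J h σ * sp (σ (Fin.last N)) =
      lastMomentFirst N J h true + lastMomentFirst N J h false := by
  simp [Fintype.sum_fin_succ_pi, lastMomentFirst]

lemma sum_weight_mul_sp_zero_mul_sp_last (J : Fin N → ℝ) (h : Fin (N + 1) → ℝ) :
    ∑ σ, weight N J h σ * (sp (σ 0) * sp (σ (Fin.last N))) =
      lastMomentFirst N J h true - lastMomentFirst N J h false := by
  simp [Fintype.sum_fin_succ_pi, lastMomentFirst, sub_eq_add_neg]

lemma covEnds_eq (J : Fin N → ℝ) (h : Fin (N + 1) → ℝ) :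
    covEnds N J h =
      4 * (∏ x, (Real.exp (2 * J x) - Real.exp (-(2 * J x)))) / part N J h ^ 2 := by
  have hZ := (part_pos J h).ne'
  rw [covEnds, gibbsE_eq_sum_weight_mul_div, gibbsE_eq_sum_weight_mul_div,
    gibbsE_eq_sum_weight_mul_div, sum_weight_mul_sp_zero, sum_weight_mul_sp_last,
    sum_weight_mul_sp_zero_mul_sp_last]
  field_simp
  rw [part_eq_partFirst_add]
  linear_combination -2 * partFirst_mul_lastMomentFirst_sub J h

lemma exp_add_add_exp_sub_le_part (J : Fin N → ℝ) (h : Fin (N + 1) → ℝ) :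
    Real.exp (∑ x, J x + ∑ x, h x) + Real.exp (∑ x, J x - ∑ x, h x) ≤ part N J h := by
  have hne : (fun _ => true : Fin (N + 1) → Bool) ≠ fun _ => false :=
    fun hc => Bool.noConfusion (congrFun hc 0)
  calc _ = ∑ σ ∈ {fun _ => true, fun _ => false}, weight N J h σ := by
        simp [sum_pair hne, weight_const, sub_eq_add_neg]
    _ ≤ ∑ σ, weight N J h σ :=
        sum_le_sum_of_subset_of_nonneg (subset_univ _) fun σ _ _ => (weight_pos J h σ).le

lemma exp_add_mul_one_add_exp_le_part (J : Fin N → ℝ) (h : Fin (N + 1) → ℝ) :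
    Real.exp (∑ x, J x + |∑ x, h x|) * (1 + Real.exp (-2 * ∑ x, |h x|)) ≤ part N J h := by
  set A := ∑ x, J x
  set H := ∑ x, h x
  have hHS : |H| ≤ ∑ x, |h x| := abs_sum_le_sum_abs _ _
  have hsym : Real.exp (A + H) + Real.exp (A - H) = Real.exp (A + |H|) + Real.exp (A - |H|) := by
    rcases abs_choice H with hH | hH <;> rw [hH]
    ring_nf
  calc _ = Real.exp (A + |H|) + Real.exp (A + |H| + -2 * ∑ x, |h x|) := by
        rw [mul_add, mul_one, Real.exp_add (A + |H|)]
    _ ≤ Real.exp (A + |H|) + Real.exp (A - |H|) := by gcongr; linarith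
    _ ≤ part N J h := hsym ▸ exp_add_add_exp_sub_le_part J h

end Ising

theorem covariance_upper_bound_signed (N : ℕ) (J : Fin N → ℝ)
    (h : Fin (N + 1) → ℝ) (hJ : ∀ x, 0 < J x) :
    covEnds N J h ≤
      (∏ x : Fin N, 4 * Real.tanh (J x) / (1 + Real.tanh (J x)) ^ 2) *
        (4 * Real.exp (-2 * |∑ x, h x|) / (1 + Real.exp (-2 * ∑ x, |h x|)) ^ 2) := by
  rw [Ising.covEnds_eq, prod_four_mul_tanh_div_one_add_tanh_sq]
  set P := ∏ x, (Real.exp (2 * J x) - Real.exp (-(2 * J x)))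
  set A := ∑ x, J x
  set H := |∑ x, h x|
  set S := ∑ x, |h x|
  have hP : 0 ≤ P := prod_nonneg fun x _ => sub_nonneg.2 <| Real.exp_le_exp.2 <| by
    linarith [hJ x]
  have hexp : Real.exp (-(2 * A)) * Real.exp (-2 * H) = (Real.exp (A + H) ^ 2)⁻¹ := by
    rw [← Real.exp_nat_mul, ← Real.exp_add, ← Real.exp_neg]
    congr 1; push_cast; ring
  calc 4 * P / part N J h ^ 2 ≤ 4 * P / (Real.exp (A + H) * (1 + Real.exp (-2 * S))) ^ 2 := by
        gcongr; exact Ising.exp_add_mul_one_add_exp_le_part J h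
    _ = P * Real.exp (-(2 * A)) * (4 * Real.exp (-2 * H) / (1 + Real.exp (-2 * S)) ^ 2) := by
        rw [mul_pow, ← div_div, div_eq_mul_inv (4 * P), ← hexp]
        ring
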